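/- Suppose the cost function c satisfies Assumption A. Fix ν a Borel probability measure on Y and ψ ∈ C(Y), and define f_ψ : B × ℝ → ℝ ∪ {+∞} by f_ψ(s,t) := ∫_0^t ψ^c(s,p) dp + C_ψ for t ≥ 0 and f_ψ(s,t) := +∞ for t < 0, where C_ψ := (1/L^{d−1}(B)) ∫_Y ψ dν. Then for every s ∈ B: f_ψ(s,t') > f_ψ(s,t) + ψ^c(s,t)·(t'−t) for all t, t' ∈ [0,∞) with t' ≠ t; moreover f_ψ(s,·) is proper, convex and lower semi-continuous on ℝ, and strictly convex on [0,∞). -/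

import Mathlib

/-!
Since `c((s,·),y)` is strictly increasing for every `y` and the minimum defining
`ψ^c(s,p)` is attained (`Y` is compact and `c(x,·) - ψ` continuous), `p ↦ ψ^c(s,p)` is strictly
increasing on `[0,∞)`. Its primitive `f_ψ(s,·)` therefore has strictly increasing difference
quotients, which gives both the strict subgradient inequality and strict convexity; continuity of
the primitive up to `t = 0` makes the extension by `+∞` lower semicontinuous.
-/

open MeasureTheory Set Filter Topology

noncomputable section

/-- The ambient source space `ℝ^{d-1} × ℝ` (with `n = d - 1`). -/
abbrev ESrc (n : ℕ) := EuclideanSpace ℝ (Fin n) × ℝ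

/-- The ambient target space `ℝ^d` (with `n = d - 1`). -/
abbrev ETgt (n : ℕ) := EuclideanSpace ℝ (Fin (n + 1))

/-- Assumption A on the cost function `c : X × Y → [0,∞)`, where `X = B × [0,∞)`:
(nonnegativity,) local Lipschitz continuity, strict monotonicity and unboundedness in the
vertical variable, and equicontinuity in the horizontal variable. -/
structure AssumptionA {n : ℕ} (B : Set (EuclideanSpace ℝ (Fin n))) (Y : Set (ETgt n))
    (c : ESrc n → ETgt n → ℝ) : Prop where
  nonneg : ∀ x ∈ B ×ˢ Ici (0:ℝ), ∀ y ∈ Y, 0 ≤ c x y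
  locLip : ∀ z ∈ (B ×ˢ Ici (0:ℝ)) ×ˢ Y, ∃ ε > 0, ∃ K : NNReal,
    LipschitzOnWith K (fun q : ESrc n × ETgt n => c q.1 q.2)
      (((B ×ˢ Ici (0:ℝ)) ×ˢ Y) ∩ Metric.ball z ε)
  strictMonoOn : ∀ s ∈ B, ∀ y ∈ Y, StrictMonoOn (fun t : ℝ => c (s, t) y) (Ici (0:ℝ))
  unbounded : ∀ s ∈ B, ∀ y ∈ Y, ∀ M : ℝ, ∃ t : ℝ, 0 ≤ t ∧ M ≤ c (s, t) y
  equicontinuous : EquicontinuousOn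
    (fun i : ↥(Ici (0:ℝ)) × ↥Y => fun s : EuclideanSpace ℝ (Fin n) =>
      c (s, (i.1 : ℝ)) (i.2 : ETgt n)) B

/-- A probability density on `B` (an element of `P_ac(B)`, identified with its density). -/
structure IsDensity {n : ℕ} (B : Set (EuclideanSpace ℝ (Fin n)))
    (ρ : EuclideanSpace ℝ (Fin n) → ℝ) : Prop where
  measurable : Measurable ρ
  nonneg : ∀ s, 0 ≤ ρ s
  zero_outside : ∀ s ∉ B, ρ s = 0
  integral_one : ∫ s, ρ s = 1

/-- The region `X_{p̄} = {(s,t) : s ∈ B, 0 ≤ t ≤ p̄(s)}` under the graph of `ρ`. -/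
def subgraph {n : ℕ} (B : Set (EuclideanSpace ℝ (Fin n)))
    (ρ : EuclideanSpace ℝ (Fin n) → ℝ) : Set (ESrc n) :=
  {x : ESrc n | x.1 ∈ B ∧ 0 ≤ x.2 ∧ x.2 ≤ ρ x.1}

/-- The measure `μ_{p̄}`: Lebesgue measure restricted to `X_{p̄}`. -/
def muOf {n : ℕ} (B : Set (EuclideanSpace ℝ (Fin n)))
    (ρ : EuclideanSpace ℝ (Fin n) → ℝ) : Measure (ESrc n) :=
  volume.restrict (subgraph B ρ)

/-- `γ` is a coupling (transport plan) between `μ` and `ν`. -/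
def IsCoupling {α β : Type*} [MeasurableSpace α] [MeasurableSpace β]
    (μ : Measure α) (ν : Measure β) (γ : Measure (α × β)) : Prop :=
  γ.map Prod.fst = μ ∧ γ.map Prod.snd = ν

/-- The optimal transport (Kantorovich) cost `T_c(μ,ν)`. -/
def transportCost {α β : Type*} [MeasurableSpace α] [MeasurableSpace β]
    (c : α → β → ℝ) (μ : Measure α) (ν : Measure β) : ℝ :=
  sInf {r : ℝ | ∃ γ : Measure (α × β), IsCoupling μ ν γ ∧ r = ∫ z, c z.1 z.2 ∂γ}

/-- `γ` is an optimal transport plan from `μ` to `ν` for the cost `c`. -/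
def IsOptimalPlan {α β : Type*} [MeasurableSpace α] [MeasurableSpace β]
    (c : α → β → ℝ) (μ : Measure α) (ν : Measure β) (γ : Measure (α × β)) : Prop :=
  IsCoupling μ ν γ ∧ ∀ γ' : Measure (α × β), IsCoupling μ ν γ' →
    ∫ z, c z.1 z.2 ∂γ ≤ ∫ z, c z.1 z.2 ∂γ'

/-- `T` is an optimal transport map from `μ` to `ν` for the cost `c`. -/
def IsOptimalMap {α β : Type*} [MeasurableSpace α] [MeasurableSpace β]
    (c : α → β → ℝ) (μ : Measure α) (ν : Measure β) (T : α → β) : Prop :=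
  Measurable T ∧ μ.map T = ν ∧ ∀ T' : α → β, Measurable T' → μ.map T' = ν →
    ∫ x, c x (T x) ∂μ ≤ ∫ x, c x (T' x) ∂μ

/-- The `c`-transform `ψ^c(x) = min_{y ∈ Y} (c(x,y) - ψ(y))`. -/
def ctransform {α β : Type*} (c : α → β → ℝ) (Y : Set β) (ψ : β → ℝ) (x : α) : ℝ :=
  sInf ((fun y => c x y - ψ y) '' Y)

/-- The Kantorovich dual functional `K(ψ; μ, ν) = ∫ ψ^c dμ + ∫ ψ dν`. -/
def Kfun {α β : Type*} [MeasurableSpace α] [MeasurableSpace β]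
    (c : α → β → ℝ) (Y : Set β) (ψ : β → ℝ) (μ : Measure α) (ν : Measure β) : ℝ :=
  ∫ x, ctransform c Y ψ x ∂μ + ∫ y, ψ y ∂ν

/-- `ψ` is a Kantorovich potential from `μ` to `ν`: a continuous maximiser of the
Kantorovich dual functional over `C(Y)`. -/
def IsKantorovichPotential {α β : Type*} [MeasurableSpace α] [MeasurableSpace β]
    [TopologicalSpace β] (c : α → β → ℝ) (Y : Set β) (ψ : β → ℝ) (μ : Measure α) (ν : Measure β) : Prop :=
  ContinuousOn ψ Y ∧ ∀ φ : β → ℝ, ContinuousOn φ Y → Kfun c Y φ μ ν ≤ Kfun c Y ψ μ ν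

/-- The primal functional `F_ν(p̄) = T_c(μ_{p̄}, ν)`. -/
def Fprimal {n : ℕ} (c : ESrc n → ETgt n → ℝ) (B : Set (EuclideanSpace ℝ (Fin n)))
    (ν : Measure (ETgt n)) (ρ : EuclideanSpace ℝ (Fin n) → ℝ) : ℝ :=
  transportCost c (muOf B ρ) ν

/-- The dual functional `G_ν(ψ) = inf_{p̄ ∈ P_ac(B)} K(ψ; μ_{p̄}, ν)`. -/
def Gdual {n : ℕ} (c : ESrc n → ETgt n → ℝ) (B : Set (EuclideanSpace ℝ (Fin n)))
    (Y : Set (ETgt n)) (ν : Measure (ETgt n)) (ψ : ETgt n → ℝ) : ℝ :=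
  sInf {r : ℝ | ∃ ρ, IsDensity B ρ ∧ r = Kfun c Y ψ (muOf B ρ) ν}

/-- `q(s,y,σ) = max {0, inf {t ≥ 0 : c((s,t),y) ≥ σ}}`, the generalized inverse of
`t ↦ c((s,t),y)`. -/
def qfun {n : ℕ} (c : ESrc n → ETgt n → ℝ) (s : EuclideanSpace ℝ (Fin n))
    (y : ETgt n) (σ : ℝ) : ℝ :=
  max 0 (sInf {t : ℝ | 0 ≤ t ∧ σ ≤ c (s, t) y})

/-- The candidate optimal surface `p̄_ψ(s) = max_{y ∈ Y} q(s, y, ψ(y) + τ)`. -/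
def pbar {n : ℕ} (c : ESrc n → ETgt n → ℝ) (Y : Set (ETgt n)) (ψ : ETgt n → ℝ)
    (τ : ℝ) (s : EuclideanSpace ℝ (Fin n)) : ℝ :=
  sSup ((fun y => qfun c s y (ψ y + τ)) '' Y)

section CTransform

variable {α β : Type*} [TopologicalSpace β] {c : α → β → ℝ} {Y : Set β} {ψ : β → ℝ}

theorem ctransform_le (hY : IsCompact Y) {x : α} (hcont : ContinuousOn (fun y => c x y - ψ y) Y)
    {y : β} (hy : y ∈ Y) : ctransform c Y ψ x ≤ c x y - ψ y :=
  csInf_le (hY.bddBelow_image hcont) (mem_image_of_mem _ hy)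

theorem exists_ctransform_eq (hY : IsCompact Y) (hYne : Y.Nonempty) {x : α}
    (hcont : ContinuousOn (fun y => c x y - ψ y) Y) : ∃ y ∈ Y, c x y - ψ y = ctransform c Y ψ x :=
  (hY.image_of_continuousOn hcont).sInf_mem (hYne.image _)

theorem strictMonoOn_ctransform {γ : Type*} [Preorder γ] {p : γ → α} {T : Set γ}
    (hY : IsCompact Y) (hYne : Y.Nonempty)
    (hcont : ∀ t ∈ T, ContinuousOn (fun y => c (p t) y - ψ y) Y)
    (hmono : ∀ y ∈ Y, StrictMonoOn (fun t => c (p t) y) T) :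
    StrictMonoOn (fun t => ctransform c Y ψ (p t)) T := by
  intro t ht t' ht' hlt
  obtain ⟨y, hy, hy_eq⟩ := exists_ctransform_eq hY hYne (hcont t' ht')
  calc ctransform c Y ψ (p t) ≤ c (p t) y - ψ y := ctransform_le hY (hcont t ht) hy
    _ < c (p t') y - ψ y := sub_lt_sub_right (hmono y hy ht ht' hlt) _
    _ = ctransform c Y ψ (p t') := hy_eq

end CTransform

namespace AssumptionA

variable {n : ℕ} {B : Set (EuclideanSpace ℝ (Fin n))} {Y : Set (ETgt n)}
  {c : ESrc n → ETgt n → ℝ}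

theorem continuousOn (hc : AssumptionA B Y c) :
    ContinuousOn (fun q : ESrc n × ETgt n => c q.1 q.2) ((B ×ˢ Ici (0:ℝ)) ×ˢ Y) :=
  LocallyLipschitzOn.continuousOn fun z hz => by
    obtain ⟨ε, hε, K, hK⟩ := hc.locLip z hz
    exact ⟨K, _, inter_mem_nhdsWithin _ (Metric.ball_mem_nhds z hε), hK⟩

theorem strictMonoOn_ctransform (hc : AssumptionA B Y c) (hY : IsCompact Y) (hYne : Y.Nonempty)
    {ψ : ETgt n → ℝ} (hψ : ContinuousOn ψ Y) {s : EuclideanSpace ℝ (Fin n)} (hs : s ∈ B) :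
    StrictMonoOn (fun p : ℝ => ctransform c Y ψ (s, p)) (Ici 0) :=
  _root_.strictMonoOn_ctransform hY hYne
    (fun p hp => (hc.continuousOn.comp (Continuous.prodMk_right (s, p)).continuousOn
      fun _ hy => ⟨⟨hs, hp⟩, hy⟩).sub hψ)
    (hc.strictMonoOn s hs)

end AssumptionA

section Primitive

open intervalIntegral

variable {G : ℝ → ℝ} {S : Set ℝ} {a b : ℝ}

theorem MonotoneOn.intervalIntegrable_of_mem (hS : S.OrdConnected) (hG : MonotoneOn G S)
    (ha : a ∈ S) (hb : b ∈ S) : IntervalIntegrable G volume a b :=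
  (hG.mono (hS.uIcc_subset ha hb)).intervalIntegrable

theorem MonotoneOn.continuousOn_primitive_Ici (hG : MonotoneOn G (Ici a)) :
    ContinuousOn (fun t => ∫ x in a..t, G x) (Ici a) := by
  have hmono : Monotone fun x => G (max a x) := fun x y hxy =>
    hG (le_max_left a x) (le_max_left a y) (max_le_max le_rfl hxy)
  refine (continuous_primitive (fun _ _ => hmono.intervalIntegrable) a).continuousOn.congr
    fun t ht => integral_congr fun x hx => ?_
  rw [uIcc_of_le (mem_Ici.1 ht)] at hx
  simp only [max_eq_right hx.1]

theorem StrictMonoOn.mul_sub_lt_integral (hG : StrictMonoOn G (Icc a b)) (hab : a < b) :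
    G a * (b - a) < ∫ x in a..b, G x := by
  have hint : IntervalIntegrable G volume a b :=
    MonotoneOn.intervalIntegrable_of_mem ordConnected_Icc hG.monotoneOn
      (left_mem_Icc.2 hab.le) (right_mem_Icc.2 hab.le)
  have hpos : 0 < ∫ x in a..b, (G x - G a) :=
    intervalIntegral_pos_of_pos_on (hint.sub intervalIntegrable_const)
      (fun x hx => sub_pos.2 (hG (left_mem_Icc.2 hab.le) (Ioo_subset_Icc_self hx) hx.1)) hab
  rw [integral_sub hint intervalIntegrable_const, intervalIntegral.integral_const,
    smul_eq_mul] at hpos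
  linarith

theorem StrictMonoOn.integral_lt_mul_sub (hG : StrictMonoOn G (Icc a b)) (hab : a < b) :
    ∫ x in a..b, G x < G b * (b - a) := by
  have hint : IntervalIntegrable G volume a b :=
    MonotoneOn.intervalIntegrable_of_mem ordConnected_Icc hG.monotoneOn
      (left_mem_Icc.2 hab.le) (right_mem_Icc.2 hab.le)
  have hpos : 0 < ∫ x in a..b, (G b - G x) :=
    intervalIntegral_pos_of_pos_on (intervalIntegrable_const.sub hint)
      (fun x hx => sub_pos.2 (hG (Ioo_subset_Icc_self hx) (right_mem_Icc.2 hab.le) hx.2)) hab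
  rw [integral_sub intervalIntegrable_const hint, intervalIntegral.integral_const,
    smul_eq_mul] at hpos
  linarith

theorem StrictMonoOn.integral_add_mul_sub_lt (hS : S.OrdConnected) (hG : StrictMonoOn G S)
    (ha : a ∈ S) {t t' : ℝ} (ht : t ∈ S) (ht' : t' ∈ S) (hne : t' ≠ t) :
    (∫ x in a..t, G x) + G t * (t' - t) < ∫ x in a..t', G x := by
  have hsplit := integral_interval_sub_left (hG.monotoneOn.intervalIntegrable_of_mem hS ha ht')
    (hG.monotoneOn.intervalIntegrable_of_mem hS ha ht)
  rcases hne.lt_or_gt with hlt | hlt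
  · have := (hG.mono (hS.out ht' ht)).integral_lt_mul_sub hlt
    rw [integral_symm t' t] at hsplit
    linarith
  · have := (hG.mono (hS.out ht ht')).mul_sub_lt_integral hlt
    linarith

theorem StrictMonoOn.strictConvexOn_integral (hS : S.OrdConnected) (hG : StrictMonoOn G S)
    (ha : a ∈ S) (C : ℝ) : StrictConvexOn ℝ S fun t => (∫ x in a..t, G x) + C := by
  refine strictConvexOn_of_slope_strict_mono_adjacent hS.convex fun {x y z} hx hz hxy hyz => ?_
  have hy : y ∈ S := hS.out hx hz ⟨hxy.le, hyz.le⟩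
  have hint : ∀ {u}, u ∈ S → IntervalIntegrable G volume a u :=
    hG.monotoneOn.intervalIntegrable_of_mem hS ha
  rw [add_sub_add_right_eq_sub, add_sub_add_right_eq_sub,
    integral_interval_sub_left (hint hy) (hint hx), integral_interval_sub_left (hint hz) (hint hy),
    div_lt_iff₀ (sub_pos.2 hxy)]
  calc ∫ u in x..y, G u < G y * (y - x) := (hG.mono (hS.out hx hy)).integral_lt_mul_sub hxy
    _ < (∫ u in y..z, G u) / (z - y) * (y - x) := by
      gcongr
      rw [lt_div_iff₀ (sub_pos.2 hyz)]
      exact (hG.mono (hS.out hy hz)).mul_sub_lt_integral hyz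

end Primitive

section ExtensionByTop

variable {α : Type*} {S : Set α} {f : α → ℝ} {fE : α → EReal}

theorem lowerSemicontinuous_of_eq_top_off [TopologicalSpace α] (hS : IsClosed S)
    (hf : ContinuousOn f S) (hfS : ∀ x ∈ S, fE x = f x) (hfSc : ∀ x ∉ S, fE x = ⊤) :
    LowerSemicontinuous fE := by
  intro x y hy
  have htop : ∀ᶠ x' in 𝓝[Sᶜ] x, y < fE x' :=
    eventually_nhdsWithin_of_forall fun x' hx' => (hfSc x' hx').symm ▸ hy.trans_le le_top
  by_cases hx : x ∈ S
  · rw [hfS x hx] at hy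
    have hS_near : ∀ᶠ x' in 𝓝[S] x, y < fE x' := by
      filter_upwards [(continuous_coe_real_ereal.continuousAt.comp_continuousWithinAt
        (hf x hx)).eventually (lt_mem_nhds hy), self_mem_nhdsWithin] with x' hx' hx'S
      rwa [hfS x' hx'S]
    rw [← nhdsWithin_univ, ← union_compl_self S, nhdsWithin_union]
    exact eventually_sup.2 ⟨hS_near, htop⟩
  · rwa [nhdsWithin_eq_nhds.2 (hS.isOpen_compl.mem_nhds hx)] at htop

theorem ConvexOn.le_add_of_eq_top_off [AddCommGroup α] [Module ℝ α] (hf : ConvexOn ℝ S f)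
    (hfS : ∀ x ∈ S, fE x = f x) (hfSc : ∀ x ∉ S, fE x = ⊤) {a b : ℝ} (ha : 0 ≤ a) (hb : 0 ≤ b)
    (hab : a + b = 1) (x y : α) : fE (a • x + b • y) ≤ a * fE x + b * fE y := by
  rcases ha.eq_or_lt with rfl | ha
  · obtain rfl : b = 1 := by linarith
    simp
  rcases hb.eq_or_lt with rfl | hb
  · obtain rfl : a = 1 := by linarith
    simp
  have hne_bot : ∀ {r : ℝ}, 0 < r → ∀ z, (r : EReal) * fE z ≠ ⊥ := fun hr z => by
    by_cases hz : z ∈ S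
    · simp [hfS z hz, ← EReal.coe_mul]
    · simp [hfSc z hz, EReal.coe_mul_top_of_pos hr]
  by_cases hx : x ∈ S
  · by_cases hy : y ∈ S
    · rw [hfS _ (hf.1 hx hy ha.le hb.le hab), hfS x hx, hfS y hy]
      exact_mod_cast hf.2 hx hy ha.le hb.le hab
    · rw [hfSc y hy, EReal.coe_mul_top_of_pos hb, EReal.add_top_of_ne_bot (hne_bot ha x)]
      exact le_top
  · rw [hfSc x hx, EReal.coe_mul_top_of_pos ha, EReal.top_add_of_ne_bot (hne_bot hb y)]
    exact le_top

end ExtensionByTop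

theorem f_psi_strictly_convex_general
    (n : ℕ)
    (B : Set (EuclideanSpace ℝ (Fin n)))
    (Y : Set (ETgt n)) (hYc : IsCompact Y) (hYne : Y.Nonempty)
    (c : ESrc n → ETgt n → ℝ) (hc : AssumptionA B Y c)
    (ν : Measure (ETgt n))
    (ψ : ETgt n → ℝ) (hψ : ContinuousOn ψ Y)
    (s : EuclideanSpace ℝ (Fin n)) (hs : s ∈ B)
    (F : ℝ → ℝ)
    (hF : F = fun t : ℝ => (∫ p in (0:ℝ)..t, ctransform c Y ψ (s, p)) +
      (1 / (volume B).toReal) * ∫ y, ψ y ∂ν)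
    (fE : ℝ → EReal)
    (hfE : fE = fun t : ℝ => if 0 ≤ t then ((F t : ℝ) : EReal) else ⊤) :
    (∀ t ∈ Ici (0:ℝ), ∀ t' ∈ Ici (0:ℝ), t' ≠ t →
      F t + ctransform c Y ψ (s, t) * (t' - t) < F t') ∧
    (∀ t : ℝ, fE t ≠ ⊥) ∧ (∃ t : ℝ, fE t ≠ ⊤) ∧
    (∀ a b : ℝ, 0 ≤ a → 0 ≤ b → a + b = 1 → ∀ t t' : ℝ,
      fE (a * t + b * t') ≤ (a : EReal) * fE t + (b : EReal) * fE t') ∧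
    LowerSemicontinuous fE ∧
    StrictConvexOn ℝ (Ici (0:ℝ)) F := by
  have hG := hc.strictMonoOn_ctransform hYc hYne hψ hs
  have hfS : ∀ t ∈ Ici (0:ℝ), fE t = F t := fun t ht => by simp [hfE, mem_Ici.1 ht]
  have hfSc : ∀ t ∉ Ici (0:ℝ), fE t = ⊤ := fun t ht => by simp [hfE, mem_Ici.not.1 ht]
  have hconv : StrictConvexOn ℝ (Ici 0) F :=
    hF ▸ hG.strictConvexOn_integral ordConnected_Ici self_mem_Ici _
  have hcont : ContinuousOn F (Ici 0) :=
    hF ▸ hG.monotoneOn.continuousOn_primitive_Ici.add continuousOn_const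
  refine ⟨fun t ht t' ht' hne => ?_, fun t => ?_, ⟨0, by simp [hfS]⟩,
    fun a b ha hb hab t t' => hconv.convexOn.le_add_of_eq_top_off hfS hfSc ha hb hab t t',
    lowerSemicontinuous_of_eq_top_off isClosed_Ici hcont hfS hfSc, hconv⟩
  · have := hG.integral_add_mul_sub_lt ordConnected_Ici self_mem_Ici ht ht' hne
    subst hF
    linarith
  · by_cases ht : t ∈ Ici (0:ℝ)
    · simp [hfS t ht]
    · simp [hfSc t ht]

/-- Strict subgradient inequality and convexity properties of
`f_ψ(s,t) = ∫_0^t ψ^c(s,p) dp + C_ψ` (extended by `+∞` for `t < 0`). -/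
theorem f_psi_strictly_convex
    (n : ℕ) (hn : 1 ≤ n)
    (B : Set (EuclideanSpace ℝ (Fin n))) (hBc : IsCompact B) (hBint : (interior B).Nonempty)
    (Y : Set (ETgt n)) (hYc : IsCompact Y) (hYne : Y.Nonempty)
    (c : ESrc n → ETgt n → ℝ) (hc : AssumptionA B Y c)
    (ν : Measure (ETgt n)) (hνp : IsProbabilityMeasure ν) (hνY : ν Yᶜ = 0)
    (ψ : ETgt n → ℝ) (hψ : ContinuousOn ψ Y)
    (s : EuclideanSpace ℝ (Fin n)) (hs : s ∈ B)
    (F : ℝ → ℝ)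
    (hF : F = fun t : ℝ => (∫ p in (0:ℝ)..t, ctransform c Y ψ (s, p)) +
      (1 / (volume B).toReal) * ∫ y, ψ y ∂ν)
    (fE : ℝ → EReal)
    (hfE : fE = fun t : ℝ => if 0 ≤ t then ((F t : ℝ) : EReal) else ⊤) :
    (∀ t ∈ Ici (0:ℝ), ∀ t' ∈ Ici (0:ℝ), t' ≠ t →
      F t + ctransform c Y ψ (s, t) * (t' - t) < F t') ∧
    (∀ t : ℝ, fE t ≠ ⊥) ∧ (∃ t : ℝ, fE t ≠ ⊤) ∧
    (∀ a b : ℝ, 0 ≤ a → 0 ≤ b → a + b = 1 → ∀ t t' : ℝ,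
      fE (a * t + b * t') ≤ (a : EReal) * fE t + (b : EReal) * fE t') ∧
    LowerSemicontinuous fE ∧
    StrictConvexOn ℝ (Ici (0:ℝ)) F :=
  f_psi_strictly_convex_general n B Y hYc hYne c hc ν ψ hψ s hs F hF fE hfE
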